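/- Let p ≥ 3 be a prime and let d be a positive integer with d + 2 ≢ 1 (mod p). Then any two elements of Ω_d each of which contains at least one entry greater than or equal to p are joined by a finite chain E = E₀, E₁, …, E_n = E' of elements of Ω_d in which, for each i, either E_{i+1} is obtained from E_i by an elementary move of type (a), (b), (c) or (d), or E_i is obtained from E_{i+1} by such a move. -/

import Mathlib

/-- `Omega p d` is the set of multisets of integers summing to `d + 2` all of whose entries
`e` satisfy `e ≥ 2` and `e ≢ 1 (mod p)`. -/
def Omega (p d : ℕ) : Set (Multiset ℕ) :=
  {E | E.sum = d + 2 ∧ ∀ e ∈ E, 2 ≤ e ∧ ¬ e ≡ 1 [MOD p]}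

/-- `ElemMoveABCD p E F` means `F` is obtained from `E` by replacing one entry `e` by parts
`f₁, …, f_m` summing to `e`, each `≥ 2` and `≢ 1 (mod p)`, according to one of the
elementary moves (a)–(d). -/
def ElemMoveABCD (p : ℕ) (E F : Multiset ℕ) : Prop :=
  ∃ e ∈ E, ∃ parts : Multiset ℕ,
    F = E.erase e + parts ∧ parts.sum = e ∧
    (∀ f ∈ parts, 2 ≤ f ∧ ¬ f ≡ 1 [MOD p]) ∧
    ((∃ f₁ f₂ : ℕ, parts = {f₁, f₂} ∧
        (f₁ - 1) / p + (f₂ - 1) / p < (e - 1) / p) ∨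
      (Multiset.card parts = 3 ∧ ∀ f ∈ parts, f ≡ (p + 1) / 2 [MOD p]) ∨
      (Multiset.card parts = 3 ∧ (p - 1) ∈ parts) ∨
      (∃ n : ℕ, 1 ≤ n ∧ n ≤ p - 1 ∧ ¬ p ∣ n * ((n + 1) * p - n ^ 2) ∧
        e = (n + 1) * (p - n + 1) ∧ parts = Multiset.replicate (p - n + 1) (n + 1)))

/-!
For an admissible entry `e` write `r(e) = (e - 1) % p ∈ [1, p - 1]`. A split `e = f₁ + f₂` is a move
of type (a) exactly when `r(f₁) + r(f₂) + 1 ≥ p`, i.e. when adding `f₁ - 1` and `f₂ - 1` carries.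
Every `E ∈ Ω_d` with an entry `≥ p` is joined to `{d + 2}`, by induction on the number of entries:
if two residues of `E` carry, merge them by (a). Otherwise an entry `b ≥ p` is in fact `> p`. If
`r(b) + r(f) ≤ p - 2` for another entry `f`, split `p - 1` off `b` and merge it with the rest of `b`
and with `f` by (c). Otherwise every other entry has residue `p - 1 - r(b)`, so there are at least
three entries `b, f, g` since `d + 2 ≢ 1`; then either `p` can be moved from `b` to `f` (through
`p + f = (p - 1) + (f + 1)`) and `p - 1, f + 1, g` merged by (c), or all three residues are
`(p - 1) / 2` and (b) merges `b, f, g`.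
-/

open Relation

abbrev Admissible (p e : ℕ) : Prop := 2 ≤ e ∧ ¬ e ≡ 1 [MOD p]

section Residues

variable {p x y : ℕ}

theorem admissible_iff {e : ℕ} : Admissible p e ↔ 0 < (e - 1) % p := by
  rcases e with _ | _ | e
  · simp
  · simp
  · rw [Admissible, Nat.ModEq.comm, Nat.modEq_iff_dvd' (by omega), Nat.dvd_iff_mod_eq_zero,
      Nat.pos_iff_ne_zero]
    simp

theorem sub_one_add_div_mod (hp : 0 < p) (hx : 1 ≤ x) (hy : 1 ≤ y) :
    (x + y - 1) / p = (x - 1) / p + (y - 1) / p + ((x - 1) % p + (y - 1) % p + 1) / p ∧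
      (x + y - 1) % p = ((x - 1) % p + (y - 1) % p + 1) % p := by
  have hdecomp : x + y - 1 = ((x - 1) % p + (y - 1) % p + 1) + p * ((x - 1) / p + (y - 1) / p) := by
    have := Nat.div_add_mod (x - 1) p
    have := Nat.div_add_mod (y - 1) p
    rw [Nat.mul_add]
    omega
  rw [hdecomp, Nat.add_mul_div_left _ _ hp, Nat.add_mul_mod_self_left]
  exact ⟨by ring, rfl⟩

theorem sub_one_add_mod_of_lt (hx : 1 ≤ x) (hy : 1 ≤ y)
    (h : (x - 1) % p + (y - 1) % p + 1 < p) :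
    (x + y - 1) % p = (x - 1) % p + (y - 1) % p + 1 := by
  rw [(sub_one_add_div_mod (by omega) hx hy).2, Nat.mod_eq_of_lt h]

theorem sub_one_add_mod_of_le (hp : 0 < p) (hx : 1 ≤ x) (hy : 1 ≤ y)
    (h : p ≤ (x - 1) % p + (y - 1) % p + 1) :
    (x + y - 1) % p = (x - 1) % p + (y - 1) % p + 1 - p := by
  have := Nat.mod_lt (x - 1) hp
  have := Nat.mod_lt (y - 1) hp
  rw [(sub_one_add_div_mod hp hx hy).2, Nat.mod_eq_sub_mod h, Nat.mod_eq_of_lt (by omega)]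

theorem mod_eq_sub_one_mod_add_one (hx : 1 ≤ x) (h : (x - 1) % p + 1 < p) :
    x % p = (x - 1) % p + 1 := by
  simpa using sub_one_add_mod_of_lt (y := 1) hx le_rfl (by simpa using h)

end Residues

section Moves

variable {p e f₁ f₂ f₃ : ℕ}

theorem admissible_self (hp : 2 ≤ p) : Admissible p p := by
  rw [admissible_iff, Nat.mod_eq_of_lt (by omega)]; omega

theorem admissible_pred (hp : 3 ≤ p) : Admissible p (p - 1) := by
  rw [admissible_iff, Nat.mod_eq_of_lt (by omega)]; omega

theorem elemMove_pair (s : Multiset ℕ) (hp : 0 < p) (h₁ : Admissible p f₁)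
    (h₂ : Admissible p f₂) (hcarry : p ≤ (f₁ - 1) % p + (f₂ - 1) % p + 1) (he : f₁ + f₂ = e) :
    ElemMoveABCD p (e ::ₘ s) (f₁ ::ₘ f₂ ::ₘ s) := by
  subst he
  refine ⟨f₁ + f₂, Multiset.mem_cons_self _ _, {f₁, f₂}, ?_, by simp, ?_, Or.inl ⟨f₁, f₂, rfl, ?_⟩⟩
  · rw [Multiset.erase_cons_head, add_comm]; simp
  · simpa using ⟨h₁, h₂⟩
  · rw [(sub_one_add_div_mod hp (by omega) (by omega)).1]
    have := Nat.div_pos hcarry hp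
    omega

theorem elemMove_triple_half (s : Multiset ℕ) (h₁ : Admissible p f₁) (h₂ : Admissible p f₂)
    (h₃ : Admissible p f₃) (hf₁ : f₁ ≡ (p + 1) / 2 [MOD p]) (hf₂ : f₂ ≡ (p + 1) / 2 [MOD p])
    (hf₃ : f₃ ≡ (p + 1) / 2 [MOD p]) (he : f₁ + f₂ + f₃ = e) :
    ElemMoveABCD p (e ::ₘ s) (f₁ ::ₘ f₂ ::ₘ f₃ ::ₘ s) := by
  subst he
  refine ⟨f₁ + f₂ + f₃, Multiset.mem_cons_self _ _, {f₁, f₂, f₃}, ?_, by simp [add_assoc], ?_,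
    Or.inr (Or.inl ⟨by simp, by simpa using ⟨hf₁, hf₂, hf₃⟩⟩)⟩
  · rw [Multiset.erase_cons_head, add_comm]; simp
  · simpa using ⟨h₁, h₂, h₃⟩

theorem elemMove_triple_pred (s : Multiset ℕ) (hp : 3 ≤ p) (h₂ : Admissible p f₂)
    (h₃ : Admissible p f₃) (he : p - 1 + f₂ + f₃ = e) :
    ElemMoveABCD p (e ::ₘ s) ((p - 1) ::ₘ f₂ ::ₘ f₃ ::ₘ s) := by
  subst he
  refine ⟨p - 1 + f₂ + f₃, Multiset.mem_cons_self _ _, {p - 1, f₂, f₃}, ?_, by simp [add_assoc], ?_,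
    Or.inr (Or.inr (Or.inl ⟨by simp, by simp⟩))⟩
  · rw [Multiset.erase_cons_head, add_comm]; simp
  · simpa using ⟨admissible_pred hp, h₂, h₃⟩

end Moves

section Linked

variable {p d : ℕ} {A B : Multiset ℕ}

def Linked (p d : ℕ) (A B : Multiset ℕ) : Prop :=
  A ∈ Omega p d ∧ B ∈ Omega p d ∧ (ElemMoveABCD p A B ∨ ElemMoveABCD p B A)

instance : Std.Symm (Linked p d) := ⟨fun _ _ h => ⟨h.2.1, h.1, h.2.2.symm⟩⟩

theorem ElemMoveABCD.sum_eq (h : ElemMoveABCD p A B) : B.sum = A.sum := by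
  obtain ⟨e, he, parts, rfl, hsum, -⟩ := h
  rw [Multiset.sum_add, hsum, add_comm, Multiset.sum_erase he]

theorem ElemMoveABCD.mem_Omega (hA : A ∈ Omega p d) (h : ElemMoveABCD p A B) : B ∈ Omega p d := by
  refine ⟨h.sum_eq.trans hA.1, ?_⟩
  obtain ⟨e, -, parts, rfl, -, hparts, -⟩ := h
  intro x hx
  rcases Multiset.mem_add.1 hx with hx | hx
  exacts [hA.2 x (Multiset.mem_of_mem_erase hx), hparts x hx]

theorem linked_of_elemMove (hA : A ∈ Omega p d) (h : ElemMoveABCD p A B) : Linked p d A B :=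
  ⟨hA, h.mem_Omega hA, .inl h⟩

theorem linked_of_merge {e : ℕ} {s : Multiset ℕ} (hB : B ∈ Omega p d) (he : Admissible p e)
    (hs : ∀ x ∈ s, x ∈ B) (h : ElemMoveABCD p (e ::ₘ s) B) : Linked p d B (e ::ₘ s) :=
  ⟨hB, ⟨h.sum_eq.symm.trans hB.1, Multiset.forall_mem_cons.2 ⟨he, fun x hx => hB.2 x (hs x hx)⟩⟩,
    .inr h⟩

theorem mem_Omega_of_reflTransGen (hA : A ∈ Omega p d) (h : ReflTransGen (Linked p d) A B) :
    B ∈ Omega p d := by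
  rcases h.cases_tail with rfl | ⟨C, -, hCB⟩
  exacts [hA, hCB.2.1]

end Linked

section Merges

variable {p d b f g r : ℕ} {s : Multiset ℕ}

theorem reflTransGen_merge_of_carry (hp : 0 < p) (hE : b ::ₘ f ::ₘ s ∈ Omega p d)
    (hcarry : p ≤ (b - 1) % p + (f - 1) % p) :
    ReflTransGen (Linked p d) (b ::ₘ f ::ₘ s) ((b + f) ::ₘ s) := by
  have hb : Admissible p b := hE.2 b (by simp)
  have hf : Admissible p f := hE.2 f (by simp)
  have hbf : Admissible p (b + f) := by
    rw [admissible_iff, sub_one_add_mod_of_le hp (by omega) (by omega) (by omega)]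
    omega
  exact .single (linked_of_merge hE hbf (by simp +contextual)
    (elemMove_pair s hp hb hf (by omega) rfl))

theorem reflTransGen_merge_via_pred (hp : 3 ≤ p) (hE : b ::ₘ f ::ₘ s ∈ Omega p d) (hb : p < b)
    (hres : (b - 1) % p + (f - 1) % p + 2 ≤ p) :
    ReflTransGen (Linked p d) (b ::ₘ f ::ₘ s) ((b + f) ::ₘ s) := by
  have hf : Admissible p f := hE.2 f (by simp)
  have hpred : (p - 1 - 1) % p = p - 2 := Nat.mod_eq_of_lt (by omega)
  obtain ⟨c, rfl⟩ : ∃ c, b = p - 1 + c := ⟨b - (p - 1), by omega⟩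
  -- `r(c) = 0` would force `r(b) = p - 1`
  have hc : Admissible p c := by
    rw [admissible_iff, Nat.pos_iff_ne_zero]
    intro hc0
    have := sub_one_add_mod_of_lt (p := p) (x := p - 1) (y := c) (by omega) (by omega) (by omega)
    omega
  have hbf : Admissible p (p - 1 + c + f) := by
    rw [admissible_iff, sub_one_add_mod_of_lt (by omega) (by omega) (by omega)]
    omega
  have hsplit := linked_of_elemMove hE (elemMove_pair (f ::ₘ s) (by omega) (admissible_pred hp) hc
    (by have := admissible_iff.1 hc; omega) rfl)
  exact .head hsplit (.single (linked_of_merge hsplit.2.1 hbf (by simp +contextual)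
    (elemMove_triple_pred s hp hc hf rfl)))

theorem reflTransGen_merge_half (hE : b ::ₘ f ::ₘ g ::ₘ s ∈ Omega p d) (hpr : 2 * r + 1 = p)
    (hbr : (b - 1) % p = r) (hfr : (f - 1) % p = r) (hgr : (g - 1) % p = r) :
    ReflTransGen (Linked p d) (b ::ₘ f ::ₘ g ::ₘ s) ((b + f + g) ::ₘ s) := by
  have hb : Admissible p b := hE.2 b (by simp)
  have hf : Admissible p f := hE.2 f (by simp)
  have hg : Admissible p g := hE.2 g (by simp)
  have hr : 0 < r := hbr ▸ admissible_iff.1 hb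
  have hhalf : ∀ x, Admissible p x → (x - 1) % p = r → x ≡ (p + 1) / 2 [MOD p] := by
    intro x hx hxr
    have := hx.1
    rw [Nat.ModEq, mod_eq_sub_one_mod_add_one (by omega) (by omega), hxr,
      Nat.mod_eq_of_lt (a := (p + 1) / 2) (by omega)]
    omega
  have hbf : (b + f - 1) % p = 0 := by
    rw [sub_one_add_mod_of_le (by omega) (by omega) (by omega) (by omega)]
    omega
  have hbfg : Admissible p (b + f + g) := by
    rw [admissible_iff, sub_one_add_mod_of_lt (by omega) (by omega) (by omega)]
    omega
  exact .single (linked_of_merge hE hbfg (by simp +contextual)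
    (elemMove_triple_half s hb hf hg (hhalf b hb hbr) (hhalf f hf hfr) (hhalf g hg hgr) rfl))

theorem reflTransGen_transfer (hp : 3 ≤ p) (hE : b ::ₘ f ::ₘ g ::ₘ s ∈ Omega p d) (hb : p < b)
    (hres : (f - 1) % p + (g - 1) % p + 2 ≤ p) :
    ReflTransGen (Linked p d) (b ::ₘ f ::ₘ g ::ₘ s) ((p + f + g) ::ₘ (b - p) ::ₘ s) := by
  have hbA : Admissible p b := hE.2 b (by simp)
  have hf : Admissible p f := hE.2 f (by simp)
  have hg : Admissible p g := hE.2 g (by simp)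
  have hself : (p - 1) % p = p - 1 := Nat.mod_eq_of_lt (by omega)
  have hpred : (p - 1 - 1) % p = p - 2 := Nat.mod_eq_of_lt (by omega)
  obtain ⟨c, rfl⟩ : ∃ c, b = p + c := ⟨b - p, by omega⟩
  rw [Nat.add_sub_cancel_left]
  have hcr : (p + c - 1) % p = (c - 1) % p := by
    rw [sub_one_add_mod_of_le (by omega) (by omega) (by omega) (by omega), hself]
    omega
  have hc : Admissible p c := admissible_iff.2 (hcr ▸ admissible_iff.1 hbA)
  have hpfr : (p + f - 1) % p = (f - 1) % p := by
    rw [sub_one_add_mod_of_le (by omega) (by omega) (by omega) (by omega), hself]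
    omega
  have hpf : Admissible p (p + f) := admissible_iff.2 (hpfr ▸ admissible_iff.1 hf)
  have hf1 : Admissible p (f + 1) := by
    have := hf.1
    rw [admissible_iff, Nat.add_sub_cancel, mod_eq_sub_one_mod_add_one (by omega) (by omega)]
    omega
  have hpfg : Admissible p (p + f + g) := by
    rw [admissible_iff, sub_one_add_mod_of_lt (by omega) (by omega) (by omega)]
    omega
  have h₁ := linked_of_elemMove hE (elemMove_pair (f ::ₘ g ::ₘ s) (by omega) (admissible_self
    (by omega)) hc (by rw [hself]; omega) rfl)
  have h₂ : Linked p d (p ::ₘ c ::ₘ f ::ₘ g ::ₘ s) ((p + f) ::ₘ c ::ₘ g ::ₘ s) := by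
    have hE₁ := h₁.2.1
    rw [Multiset.cons_swap c f] at hE₁ ⊢
    exact linked_of_merge hE₁ hpf (by simp +contextual)
      (elemMove_pair _ (by omega) (admissible_self (by omega)) hf (by rw [hself]; omega) rfl)
  have h₃ := linked_of_elemMove h₂.2.1 (elemMove_pair (c ::ₘ g ::ₘ s) (by omega)
    (admissible_pred hp) hf1 (by rw [hpred]; have := admissible_iff.1 hf1; omega) (by omega))
  have h₄ : Linked p d ((p - 1) ::ₘ (f + 1) ::ₘ c ::ₘ g ::ₘ s) ((p + f + g) ::ₘ c ::ₘ s) := by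
    have hE₃ := h₃.2.1
    rw [Multiset.cons_swap c g] at hE₃ ⊢
    exact linked_of_merge hE₃ hpfg (by simp +contextual)
      (elemMove_triple_pred _ hp hf1 hg (by omega))
  exact .head h₁ (.head h₂ (.head h₃ (.single h₄)))

end Merges

section Reduction

variable {p d : ℕ} {E : Multiset ℕ}

theorem exists_reflTransGen_card_lt (hp : 3 ≤ p) (hd : ¬ d + 2 ≡ 1 [MOD p])
    (hE : E ∈ Omega p d) (hbig : ∃ b ∈ E, p ≤ b) (hcard : 2 ≤ Multiset.card E) :
    ∃ F, ReflTransGen (Linked p d) E F ∧ Multiset.card F < Multiset.card E ∧ ∃ e ∈ F, p ≤ e := by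
  by_cases hcarry : ∃ x y s, E = x ::ₘ y ::ₘ s ∧ p ≤ (x - 1) % p + (y - 1) % p
  · obtain ⟨x, y, s, rfl, h⟩ := hcarry
    refine ⟨_, reflTransGen_merge_of_carry (by omega) hE h, by simp, x + y, by simp, ?_⟩
    have := Nat.mod_le (x - 1) p
    have := Nat.mod_le (y - 1) p
    omega
  push Not at hcarry
  obtain ⟨b, hbE, hbp⟩ := hbig
  obtain ⟨t, rfl⟩ := Multiset.exists_cons_of_mem hbE
  obtain ⟨f₀, hf₀⟩ : ∃ f, f ∈ t :=
    Multiset.card_pos_iff_exists_mem.1 (by simp only [Multiset.card_cons] at hcard; omega)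
  have hres : ∀ f ∈ t, 0 < (f - 1) % p ∧ (b - 1) % p + (f - 1) % p < p := by
    intro f hf
    obtain ⟨u, rfl⟩ := Multiset.exists_cons_of_mem hf
    exact ⟨admissible_iff.1 (hE.2 f (by simp)), hcarry b f u rfl⟩
  have hb : p < b := by
    refine lt_of_le_of_ne hbp fun hpb => ?_
    have := hres f₀ hf₀
    rw [← hpb, Nat.mod_eq_of_lt (a := p - 1) (by omega)] at this
    omega
  by_cases hpred : ∃ f ∈ t, (b - 1) % p + (f - 1) % p + 2 ≤ p
  · obtain ⟨f, hf, h⟩ := hpred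
    obtain ⟨u, rfl⟩ := Multiset.exists_cons_of_mem hf
    exact ⟨_, reflTransGen_merge_via_pred hp hE hb h, by simp, b + f, by simp, by omega⟩
  push Not at hpred
  have hcompl : ∀ f ∈ t, (b - 1) % p + (f - 1) % p + 1 = p := fun f hf => by
    have := hres f hf
    have := hpred f hf
    omega
  obtain ⟨u, rfl⟩ := Multiset.exists_cons_of_mem hf₀
  rcases Multiset.empty_or_exists_mem u with rfl | ⟨g, hg⟩
  · -- with only two complementary entries the sum `d + 2` would be `≡ 1`
    have hdA : 0 < (d + 2 - 1) % p := admissible_iff.1 ⟨by omega, hd⟩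
    have hsum : d + 2 = b + f₀ := by simpa using hE.1.symm
    have hbf := hcompl f₀ hf₀
    have := (hE.2 f₀ (by simp)).1
    rw [hsum, sub_one_add_mod_of_le (by omega) (by omega) (by omega) hbf.ge] at hdA
    omega
  obtain ⟨s, rfl⟩ := Multiset.exists_cons_of_mem hg
  have hf := hcompl f₀ (by simp)
  have hg := hcompl g (by simp)
  have hfg := hcarry f₀ g (b ::ₘ s) (by simp only [Multiset.cons_swap])
  by_cases h : (f₀ - 1) % p + (g - 1) % p + 2 ≤ p
  · exact ⟨_, reflTransGen_transfer hp hE hb h, by simp, p + f₀ + g, by simp, by omega⟩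
  · exact ⟨_, reflTransGen_merge_half hE (r := (b - 1) % p) (by omega) rfl (by omega) (by omega),
      by simp, b + f₀ + g, by simp, by omega⟩

theorem reflTransGen_singleton (hp : 3 ≤ p) (hd : ¬ d + 2 ≡ 1 [MOD p]) (hE : E ∈ Omega p d)
    (hbig : ∃ b ∈ E, p ≤ b) : ReflTransGen (Linked p d) E {d + 2} := by
  induction hn : Multiset.card E using Nat.strong_induction_on generalizing E with
  | _ n ih =>
  rcases Nat.lt_or_ge n 2 with hlt | hcard
  · obtain ⟨a, rfl⟩ : ∃ a, E = {a} := by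
      refine Multiset.card_eq_one.1 (le_antisymm (by omega) (Nat.one_le_iff_ne_zero.2 fun h => ?_))
      rw [Multiset.card_eq_zero.1 h] at hE
      simpa using hE.1
    simpa using hE.1 ▸ ReflTransGen.refl
  obtain ⟨F, hEF, hFE, hFbig⟩ := exists_reflTransGen_card_lt hp hd hE hbig (hn ▸ hcard)
  exact hEF.trans (ih _ (hn ▸ hFE) (mem_Omega_of_reflTransGen hE hEF) hFbig rfl)

end Reduction

theorem stmt15_general (p d : ℕ) (hp3 : 3 ≤ p)
    (hdmod : ¬ d + 2 ≡ 1 [MOD p])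
    (E E' : Multiset ℕ) (hE : E ∈ Omega p d) (hE' : E' ∈ Omega p d)
    (hEbig : ∃ e ∈ E, p ≤ e) (hE'big : ∃ e ∈ E', p ≤ e) :
    Relation.ReflTransGen
      (fun A B => A ∈ Omega p d ∧ B ∈ Omega p d ∧
        (ElemMoveABCD p A B ∨ ElemMoveABCD p B A)) E E' :=
  (reflTransGen_singleton hp3 hdmod hE hEbig).trans
    (Std.Symm.symm _ _ (reflTransGen_singleton hp3 hdmod hE' hE'big))

/-- Let `p ≥ 3` be a prime and `d ≥ 1` with `d + 2 ≢ 1 (mod p)`.  Then any two elements of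
`Ω_d` each containing at least one entry `≥ p` are joined by a finite chain of elements of
`Ω_d` in which consecutive members are related by an elementary move of type (a)–(d) (in one
direction or the other). -/
theorem stmt15 (p d : ℕ) (hp : p.Prime) (hp3 : 3 ≤ p) (hd : 0 < d)
    (hdmod : ¬ d + 2 ≡ 1 [MOD p])
    (E E' : Multiset ℕ) (hE : E ∈ Omega p d) (hE' : E' ∈ Omega p d)
    (hEbig : ∃ e ∈ E, p ≤ e) (hE'big : ∃ e ∈ E', p ≤ e) :
    Relation.ReflTransGen
      (fun A B => A ∈ Omega p d ∧ B ∈ Omega p d ∧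
        (ElemMoveABCD p A B ∨ ElemMoveABCD p B A)) E E' :=
  stmt15_general p d hp3 hdmod E E' hE hE' hEbig hE'big
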